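/- For a random caterpillar with m ≥ 2 spine nodes, the expected Wiener index equals ((m^2+6m-1)n^2 + (m-1)(2m^2+7m-1)n + m^2(m^2-1))/(6m). -/

import Mathlib

open Finset Filter

/-- Number of leaves attached to spine node `i` given attachment choices `ω`. -/
def leafCount {m n : ℕ} (ω : Fin n → Fin m) (i : Fin m) : ℕ :=
  (Finset.univ.filter (fun j => ω j = i)).card

/-- Wiener index of the caterpillar: sum of graph distances over all unordered pairs of
nodes, decomposed into spine–spine, leaf–leaf and spine–leaf contributions. -/
def wiener {m n : ℕ} (ω : Fin n → Fin m) : ℕ :=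
  (∑ i : Fin m, ∑ j : Fin m, if i.val < j.val then j.val - i.val else 0)
    + (∑ i : Fin m, ∑ j : Fin m,
        if i.val < j.val then (j.val - i.val + 2) * (leafCount ω i * leafCount ω j) else 0)
    + (∑ i : Fin m, leafCount ω i * (leafCount ω i - 1))
    + (∑ i : Fin m, ∑ j : Fin m, (Nat.dist i.val j.val + 1) * leafCount ω i)

/-- Hyper Wiener index: `Σ_{pairs} (dist + dist²)`. -/
def hyperWiener {m n : ℕ} (ω : Fin n → Fin m) : ℕ :=
  (∑ i : Fin m, ∑ j : Fin m,
      if i.val < j.val then (j.val - i.val) + (j.val - i.val) ^ 2 else 0)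
    + (∑ i : Fin m, ∑ j : Fin m,
        if i.val < j.val then
          ((j.val - i.val + 2) + (j.val - i.val + 2) ^ 2) * (leafCount ω i * leafCount ω j)
        else 0)
    + (∑ i : Fin m, 3 * (leafCount ω i * (leafCount ω i - 1)))
    + (∑ i : Fin m, ∑ j : Fin m,
        ((Nat.dist i.val j.val + 1) + (Nat.dist i.val j.val + 1) ^ 2) * leafCount ω i)

section helpers

lemma sum_apply_one {α : Type*} [Fintype α] [DecidableEq α] {M : ℕ} (k : α) (g : Fin M → ℝ) :
    ∑ ω : α → Fin M, g (ω k) = (M : ℝ) ^ (Fintype.card α - 1) * ∑ b, g b := by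
  have h1 : ∀ ω : α → Fin M, g (ω k) = ∏ a, (if a = k then g (ω a) else 1) := by
    intro ω; rw [Finset.prod_ite_eq' univ k (fun a => g (ω a))]; simp
  simp only [h1]
  rw [← Fintype.prod_sum (fun a b => if a = k then g b else 1)]
  have h2 : ∀ a : α, (∑ b, if a = k then g b else (1:ℝ)) = if a = k then ∑ b, g b else M := by
    intro a; split_ifs <;> simp
  simp only [h2]
  rw [← Finset.mul_prod_erase univ _ (mem_univ k), if_pos rfl]
  rw [Finset.prod_congr rfl (fun a ha => if_neg (Finset.ne_of_mem_erase ha))]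
  rw [Finset.prod_const, Finset.card_erase_of_mem (mem_univ k), Finset.card_univ, mul_comm]

lemma sum_apply_two {α : Type*} [Fintype α] [DecidableEq α] {M : ℕ} (k l : α) (hkl : k ≠ l)
    (g₁ g₂ : Fin M → ℝ) :
    ∑ ω : α → Fin M, g₁ (ω k) * g₂ (ω l)
      = (M : ℝ) ^ (Fintype.card α - 2) * ((∑ b, g₁ b) * (∑ b, g₂ b)) := by
  have hl : l ∈ univ.erase k := Finset.mem_erase.2 ⟨hkl.symm, mem_univ l⟩
  have key : ∀ (f₁ f₂ : α → ℝ) (c : ℝ),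
      (∏ a, (if a = k then f₁ a else if a = l then f₂ a else c))
        = f₁ k * f₂ l * c ^ (Fintype.card α - 2) := by
    intro f₁ f₂ c
    rw [← Finset.mul_prod_erase univ _ (mem_univ k), if_pos rfl,
      ← Finset.mul_prod_erase _ _ hl, if_neg hkl.symm, if_pos rfl, ← mul_assoc]
    congr 1
    rw [Finset.prod_congr rfl (fun a ha => ?_), Finset.prod_const,
      Finset.card_erase_of_mem hl, Finset.card_erase_of_mem (mem_univ k), Finset.card_univ,
      Nat.sub_sub]
    have h1 := Finset.ne_of_mem_erase ha
    have h2 := Finset.ne_of_mem_erase (Finset.mem_of_mem_erase ha)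
    rw [if_neg h2, if_neg h1]
  have h1 : ∀ ω : α → Fin M, g₁ (ω k) * g₂ (ω l)
      = ∏ a, (if a = k then g₁ (ω a) else if a = l then g₂ (ω a) else 1) := by
    intro ω; rw [key]; simp
  simp only [h1]
  rw [← Fintype.prod_sum (fun a b => if a = k then g₁ b else if a = l then g₂ b else 1)]
  have h2 : ∀ a : α, (∑ b, if a = k then g₁ b else if a = l then g₂ b else (1:ℝ))
      = if a = k then (fun _ : α => ∑ b, g₁ b) a else if a = l then (fun _ : α => ∑ b, g₂ b) a
        else (M:ℝ) := by
    intro a; split_ifs <;> simp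
  rw [Finset.prod_congr rfl (fun a _ => h2 a), key]
  ring

lemma leafCount_cast {m n : ℕ} (ω : Fin n → Fin m) (i : Fin m) :
    (leafCount ω i : ℝ) = ∑ k : Fin n, (if ω k = i then (1:ℝ) else 0) := by
  rw [leafCount, Finset.card_filter]
  push_cast
  rfl

lemma sum_leafCount (m n : ℕ) (i : Fin m) :
    ∑ ω : Fin n → Fin m, (leafCount ω i : ℝ) = n * (m:ℝ) ^ (n - 1) := by
  simp only [leafCount_cast]
  rw [Finset.sum_comm]
  have h : ∀ k : Fin n, ∑ ω : Fin n → Fin m, (if ω k = i then (1:ℝ) else 0)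
      = (m:ℝ) ^ (n-1) := by
    intro k
    rw [sum_apply_one k (fun b => if b = i then (1:ℝ) else 0)]
    simp [Finset.sum_ite_eq' univ i (fun _ => (1:ℝ))]
  simp [h, Finset.sum_const]

lemma sum_leaf_mul (m n : ℕ) (i j : Fin m) :
    ∑ ω : Fin n → Fin m, (leafCount ω i : ℝ) * (leafCount ω j : ℝ)
      = ((n:ℝ)^2 - n) * (m:ℝ) ^ (n - 2)
        + (if i = j then (n:ℝ) * (m:ℝ) ^ (n - 1) else 0) := by
  simp only [leafCount_cast, Finset.sum_mul_sum]
  rw [Finset.sum_comm]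
  have h : ∀ k : Fin n, ∑ ω : Fin n → Fin m,
      ∑ l : Fin n, (if ω k = i then (1:ℝ) else 0) * (if ω l = j then (1:ℝ) else 0)
      = ∑ l : Fin n, if k = l then (if i = j then (m:ℝ)^(n-1) else 0)
          else (m:ℝ)^(n-2) := by
    intro k
    rw [Finset.sum_comm]
    refine Finset.sum_congr rfl (fun l _ => ?_)
    by_cases hkl : k = l
    · subst hkl
      rw [if_pos rfl]
      have : ∀ ω : Fin n → Fin m, (if ω k = i then (1:ℝ) else 0) * (if ω k = j then (1:ℝ) else 0)
          = (fun b => (if b = i then (1:ℝ) else 0) * (if b = j then (1:ℝ) else 0)) (ω k) := by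
        intro ω; rfl
      rw [Finset.sum_congr rfl (fun ω _ => this ω),
        sum_apply_one k (fun b => (if b = i then (1:ℝ) else 0) * (if b = j then (1:ℝ) else 0))]
      by_cases hij : i = j
      · subst hij; simp [Finset.sum_ite_eq' univ i (fun _ => (1:ℝ))]
      · rw [if_neg hij]
        have : ∀ b : Fin m, (if b = i then (1:ℝ) else 0) * (if b = j then (1:ℝ) else 0) = 0 := by
          intro b; split_ifs with h1 h2 <;> simp_all
        simp [this]
    · rw [if_neg hkl, sum_apply_two k l hkl (fun b => if b = i then (1:ℝ) else 0)
        (fun b => if b = j then (1:ℝ) else 0)]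
      simp [Finset.sum_ite_eq' univ i (fun _ => (1:ℝ)), Finset.sum_ite_eq' univ j (fun _ => (1:ℝ))]
  rw [Finset.sum_congr rfl (fun k _ => h k)]
  have h2 : ∀ k : Fin n, (∑ l : Fin n, if k = l then (if i = j then (m:ℝ)^(n-1) else 0)
      else (m:ℝ)^(n-2)) = ((n:ℝ) - 1) * (m:ℝ)^(n-2) + (if i = j then (m:ℝ)^(n-1) else 0) := by
    intro k
    have e : ∀ l : Fin n, (if k = l then (if i = j then (m:ℝ)^(n-1) else 0) else (m:ℝ)^(n-2))
        = (m:ℝ)^(n-2) + (if k = l then (if i = j then (m:ℝ)^(n-1) else 0) - (m:ℝ)^(n-2)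
            else 0) := by
      intro l; split_ifs <;> ring
    rw [Finset.sum_congr rfl (fun l _ => e l), Finset.sum_add_distrib, Finset.sum_const,
      Finset.sum_ite_eq univ k
        (fun _ => (if i = j then (m:ℝ)^(n-1) else 0) - (m:ℝ)^(n-2))]
    simp only [mem_univ, if_pos, card_univ, Fintype.card_fin, nsmul_eq_mul]
    split_ifs <;> ring
  rw [Finset.sum_congr rfl (fun k _ => h2 k), Finset.sum_const, card_univ, Fintype.card_fin,
    nsmul_eq_mul]
  split_ifs <;> ring

lemma sum_leafSq (m n : ℕ) (i : Fin m) :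
    ∑ ω : Fin n → Fin m, (leafCount ω i : ℝ) * ((leafCount ω i - 1 : ℕ) : ℝ)
      = ((n:ℝ)^2 - n) * (m:ℝ) ^ (n - 2) := by
  have cast1 : ∀ X : ℕ, (X:ℝ) * ((X - 1 : ℕ):ℝ) = (X:ℝ) * (X:ℝ) - X := by
    intro X; cases X with
    | zero => simp
    | succ Y => push_cast [Nat.succ_sub_one]; ring
  rw [Finset.sum_congr rfl (fun ω _ => cast1 (leafCount ω i)), Finset.sum_sub_distrib,
    sum_leaf_mul m n i i, sum_leafCount m n i, if_pos rfl]
  ring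

lemma gauss_real (m : ℕ) : ∑ i ∈ range m, (i:ℝ) = ((m:ℝ)^2 - m)/2 := by
  induction m with
  | zero => simp
  | succ p ih => rw [Finset.sum_range_succ, ih]; push_cast; ring

lemma A_val (m : ℕ) :
    ∑ i ∈ range m, ∑ j ∈ range m, (if i < j then (j:ℝ) - i else 0)
      = ((m:ℝ)^3 - m)/6 := by
  induction m with
  | zero => simp
  | succ p ih =>
    have step : ∀ i, ∑ j ∈ range (p+1), (if i < j then (j:ℝ) - i else 0)
        = (∑ j ∈ range p, (if i < j then (j:ℝ) - i else 0)) + (if i < p then (p:ℝ) - i else 0) :=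
      fun i => Finset.sum_range_succ _ p
    rw [Finset.sum_range_succ, Finset.sum_congr rfl (fun i _ => step i),
      Finset.sum_add_distrib, ih]
    have h1 : ∑ j ∈ range p, (if p < j then (j:ℝ) - p else 0) = 0 := by
      refine Finset.sum_eq_zero (fun j hj => ?_)
      rw [if_neg]; exact fun h => absurd (Finset.mem_range.1 hj) (not_lt.2 h.le)
    have h2 : ∑ i ∈ range p, (if i < p then (p:ℝ) - i else 0)
        = ∑ i ∈ range p, ((p:ℝ) - i) := by
      refine Finset.sum_congr rfl (fun i hi => if_pos (Finset.mem_range.1 hi))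
    rw [step p, h1, h2, Finset.sum_sub_distrib, Finset.sum_const, gauss_real, Finset.card_range,
      nsmul_eq_mul]
    simp only [lt_self_iff_false, if_false]
    push_cast; ring

lemma P_val (m : ℕ) :
    ∑ i ∈ range m, ∑ j ∈ range m, (if i < j then (1:ℝ) else 0) = ((m:ℝ)^2 - m)/2 := by
  induction m with
  | zero => simp
  | succ p ih =>
    have step : ∀ i, ∑ j ∈ range (p+1), (if i < j then (1:ℝ) else 0)
        = (∑ j ∈ range p, (if i < j then (1:ℝ) else 0)) + (if i < p then (1:ℝ) else 0) :=
      fun i => Finset.sum_range_succ _ p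
    rw [Finset.sum_range_succ, Finset.sum_congr rfl (fun i _ => step i),
      Finset.sum_add_distrib, ih]
    have h1 : ∑ j ∈ range p, (if p < j then (1:ℝ) else 0) = 0 := by
      refine Finset.sum_eq_zero (fun j hj => ?_)
      rw [if_neg]; exact fun h => absurd (Finset.mem_range.1 hj) (not_lt.2 h.le)
    have h2 : ∑ i ∈ range p, (if i < p then (1:ℝ) else 0) = ∑ i ∈ range p, (1:ℝ) :=
      Finset.sum_congr rfl (fun i hi => if_pos (Finset.mem_range.1 hi))
    rw [step p, h1, h2, Finset.sum_const, Finset.card_range, nsmul_eq_mul]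
    simp only [lt_self_iff_false, if_false]
    push_cast; ring

lemma D_val (m : ℕ) :
    ∑ i ∈ range m, ∑ j ∈ range m, (Nat.dist i j : ℝ) = ((m:ℝ)^3 - m)/3 := by
  induction m with
  | zero => simp
  | succ p ih =>
    have step : ∀ i, ∑ j ∈ range (p+1), (Nat.dist i j : ℝ)
        = (∑ j ∈ range p, (Nat.dist i j : ℝ)) + Nat.dist i p :=
      fun i => Finset.sum_range_succ _ p
    rw [Finset.sum_range_succ, Finset.sum_congr rfl (fun i _ => step i),
      Finset.sum_add_distrib, ih]
    have h1 : ∑ j ∈ range p, (Nat.dist p j : ℝ) = ∑ j ∈ range p, ((p:ℝ) - j) := by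
      refine Finset.sum_congr rfl (fun j hj => ?_)
      rw [Nat.dist_comm, Nat.dist_eq_sub_of_le (Finset.mem_range.1 hj).le]
      push_cast [Nat.cast_sub (Finset.mem_range.1 hj).le]; ring
    have h2 : ∑ i ∈ range p, (Nat.dist i p : ℝ) = ∑ i ∈ range p, ((p:ℝ) - i) := by
      refine Finset.sum_congr rfl (fun i hi => ?_)
      rw [Nat.dist_eq_sub_of_le (Finset.mem_range.1 hi).le]
      push_cast [Nat.cast_sub (Finset.mem_range.1 hi).le]; ring
    rw [step p, h1, h2, Nat.dist_self]
    simp only [Finset.sum_sub_distrib, Finset.sum_const, Finset.card_range, nsmul_eq_mul,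
      gauss_real]
    push_cast; ring

end helpers

/-- The expected Wiener index of a random caterpillar with `m ≥ 2` spine nodes after
`n` steps equals `((m²+6m-1)n² + (m-1)(2m²+7m-1)n + m²(m²-1))/(6m)`. -/
theorem expected_wiener (m n : ℕ) (hm : 2 ≤ m) :
    (∑ ω : Fin n → Fin m, (wiener ω : ℝ)) / (m : ℝ) ^ n
      = ((m ^ 2 + 6 * m - 1) * n ^ 2 + (m - 1) * (2 * m ^ 2 + 7 * m - 1) * n
          + m ^ 2 * (m ^ 2 - 1)) / (6 * m) := by
  have hm0 : (m:ℝ) ≠ 0 := Nat.cast_ne_zero.2 (by omega)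
  set A : ℝ := ((m:ℝ)^3 - m)/6 with hA
  set P : ℝ := ((m:ℝ)^2 - m)/2 with hP
  set D : ℝ := ((m:ℝ)^3 - m)/3 with hD
  set C1 : ℝ := (n:ℝ) * (m:ℝ)^(n-1) with hC1
  set C2 : ℝ := ((n:ℝ)^2 - n) * (m:ℝ)^(n-2) with hC2
  -- spine-spine sum value
  have specA : ∑ i : Fin m, ∑ j : Fin m, (if i.val < j.val then (j.val:ℝ) - i.val else 0)
      = A := by
    rw [Fin.sum_univ_eq_sum_range (fun i => ∑ j : Fin m, if i < j.val then (j.val:ℝ) - i else 0)]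
    rw [Finset.sum_congr rfl (fun i _ =>
      Fin.sum_univ_eq_sum_range (fun j => if i < j then (j:ℝ) - i else 0) m)]
    exact A_val m
  have specP : ∑ i : Fin m, ∑ j : Fin m, (if i.val < j.val then (1:ℝ) else 0) = P := by
    rw [Fin.sum_univ_eq_sum_range (fun i => ∑ j : Fin m, if i < j.val then (1:ℝ) else 0)]
    rw [Finset.sum_congr rfl (fun i _ =>
      Fin.sum_univ_eq_sum_range (fun j => if i < j then (1:ℝ) else 0) m)]
    exact P_val m
  have specD : ∑ i : Fin m, ∑ j : Fin m, (Nat.dist i.val j.val : ℝ) = D := by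
    rw [Fin.sum_univ_eq_sum_range (fun i => ∑ j : Fin m, (Nat.dist i j.val : ℝ))]
    rw [Finset.sum_congr rfl (fun i _ =>
      Fin.sum_univ_eq_sum_range (fun j => (Nat.dist i j : ℝ)) m)]
    exact D_val m
  have key : ∑ ω : Fin n → Fin m, (wiener ω : ℝ)
      = (m:ℝ)^n * A + C2 * (A + 2*P) + (m:ℝ) * C2 + C1 * (D + (m:ℝ)^2) := by
    have expand : ∀ ω : Fin n → Fin m, (wiener ω : ℝ)
        = (∑ i : Fin m, ∑ j : Fin m, if i.val < j.val then (j.val:ℝ) - i.val else 0)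
          + (∑ i : Fin m, ∑ j : Fin m,
              if i.val < j.val then ((j.val:ℝ) - i.val + 2)
                * ((leafCount ω i : ℝ) * (leafCount ω j : ℝ)) else 0)
          + (∑ i : Fin m, (leafCount ω i : ℝ) * ((leafCount ω i - 1 : ℕ) : ℝ))
          + (∑ i : Fin m, ∑ j : Fin m,
              ((Nat.dist i.val j.val : ℝ) + 1) * (leafCount ω i : ℝ)) := by
      intro ω
      rw [wiener]
      push_cast
      congr 1
      congr 1
      congr 1
      · refine Finset.sum_congr rfl (fun i _ => Finset.sum_congr rfl (fun j _ => ?_))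
        split_ifs with h
        · rw [Nat.cast_sub h.le]
        · rfl
      · refine Finset.sum_congr rfl (fun i _ => Finset.sum_congr rfl (fun j _ => ?_))
        split_ifs with h
        · rw [Nat.cast_sub h.le]
        · rfl
    rw [Finset.sum_congr rfl (fun ω _ => expand ω)]
    rw [Finset.sum_add_distrib, Finset.sum_add_distrib, Finset.sum_add_distrib]
    -- piece 0
    have p0 : ∑ _ω : Fin n → Fin m,
        (∑ i : Fin m, ∑ j : Fin m, if i.val < j.val then (j.val:ℝ) - i.val else 0)
        = (m:ℝ)^n * A := by
      rw [Finset.sum_const, card_univ, Fintype.card_fun, Fintype.card_fin, Fintype.card_fin,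
        nsmul_eq_mul, specA]
      push_cast
      ring
    -- piece 1
    have p1 : ∑ ω : Fin n → Fin m, (∑ i : Fin m, ∑ j : Fin m,
        if i.val < j.val then ((j.val:ℝ) - i.val + 2)
          * ((leafCount ω i : ℝ) * (leafCount ω j : ℝ)) else 0)
        = C2 * (A + 2*P) := by
      rw [Finset.sum_comm]
      rw [Finset.sum_congr rfl (fun i _ => Finset.sum_comm)]
      have e2 : ∀ i j : Fin m, ∑ ω : Fin n → Fin m,
          (if i.val < j.val then ((j.val:ℝ) - i.val + 2)
            * ((leafCount ω i : ℝ) * (leafCount ω j : ℝ)) else 0)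
          = ((if i.val < j.val then ((j.val:ℝ) - i.val) else 0)
              + 2 * (if i.val < j.val then (1:ℝ) else 0)) * C2 := by
        intro i j
        by_cases h : i.val < j.val
        · have hij : i ≠ j := fun e => absurd h (by rw [e]; exact lt_irrefl _)
          simp only [if_pos h, ← Finset.mul_sum]
          rw [sum_leaf_mul m n i j, if_neg hij, add_zero, hC2]
          ring
        · simp [h]
      rw [Finset.sum_congr rfl (fun i _ => Finset.sum_congr rfl (fun j _ => e2 i j))]
      simp only [← Finset.sum_mul]
      rw [Finset.sum_congr rfl (fun i _ => Finset.sum_add_distrib), Finset.sum_add_distrib,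
        specA]
      simp only [← Finset.mul_sum]
      rw [specP]
      ring
    -- piece 2
    have p2 : ∑ ω : Fin n → Fin m,
        (∑ i : Fin m, (leafCount ω i : ℝ) * ((leafCount ω i - 1 : ℕ) : ℝ))
        = (m:ℝ) * C2 := by
      rw [Finset.sum_comm]
      rw [Finset.sum_congr rfl (fun i _ => sum_leafSq m n i), Finset.sum_const, card_univ,
        Fintype.card_fin, nsmul_eq_mul, hC2]
    -- piece 3
    have p3 : ∑ ω : Fin n → Fin m, (∑ i : Fin m, ∑ j : Fin m,
        ((Nat.dist i.val j.val : ℝ) + 1) * (leafCount ω i : ℝ))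
        = C1 * (D + (m:ℝ)^2) := by
      rw [Finset.sum_comm]
      rw [Finset.sum_congr rfl (fun i _ => Finset.sum_comm)]
      have e3 : ∀ i j : Fin m, ∑ ω : Fin n → Fin m,
          ((Nat.dist i.val j.val : ℝ) + 1) * (leafCount ω i : ℝ)
          = ((Nat.dist i.val j.val : ℝ) + 1) * C1 := by
        intro i j
        rw [← Finset.mul_sum, sum_leafCount m n i, hC1]
      rw [Finset.sum_congr rfl (fun i _ => Finset.sum_congr rfl (fun j _ => e3 i j))]
      simp only [add_mul, one_mul]
      rw [Finset.sum_congr rfl (fun i _ => Finset.sum_add_distrib), Finset.sum_add_distrib]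
      simp only [← Finset.sum_mul]
      rw [specD]
      have hcc : (∑ _i : Fin m, ∑ _j : Fin m, (n:ℝ)) = (m:ℝ) * ((m:ℝ) * (n:ℝ)) := by
        simp [Finset.sum_const, card_univ, nsmul_eq_mul]
      simp only [Finset.sum_const, card_univ, Fintype.card_fin, nsmul_eq_mul]
      ring
    rw [p0, p1, p2, p3]
  rw [key, hA, hP, hD, hC1, hC2]
  match n with
  | 0 =>
    norm_num
    field_simp
  | 1 =>
    norm_num
    field_simp
    ring
  | (k+2) =>
    have hred1 : k + 2 - 1 = k + 1 := rfl
    have hred2 : k + 2 - 2 = k := rfl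
    rw [hred1, hred2, pow_succ, pow_succ, pow_succ]
    have hk : (m:ℝ)^k ≠ 0 := pow_ne_zero _ hm0
    push_cast
    field_simp
    ring
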